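/- Let 0 < m ≤ M be real numbers. There is a continuous function σ : [0, π) → [0, ∞) with σ(0) = 0 such that: whenever x, y, z are points in the Euclidean plane forming an isosceles triangle with d(x,y) = d(x,z), and x', y', z' are points in the Euclidean plane such that the ratios d(x,y)/d(x',y'), d(x,z)/d(x',z'), and d(y,z)/d(y',z') all lie in [m, M], then the angle at x' in the triangle x'y'z' satisfies ∠x'(y',z') ≤ σ(∠x(y,z)). -/

import Mathlib

open Real EuclideanGeometry

/-!
By the law of cosines, `2 d(x',y') d(x',z') (1 - cos ∠x') = d(y',z')² - (d(x',y') - d(x',z'))²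
≤ d(y',z')²`, with equality `d(y,z)² = 2 d(x,y)² (1 - cos ∠x)` for the isosceles triangle.
The ratio bounds then give `1 - cos ∠x' ≤ (M/m)² (1 - cos ∠x)`, and since `arccos` is antitone
`σ θ = arccos (1 - (M/m)² (1 - cos θ))` works.
-/

section LawOfCosines

variable {V P : Type*} [NormedAddCommGroup V] [InnerProductSpace ℝ V] [MetricSpace P]
  [NormedAddTorsor V P]

theorem two_mul_dist_mul_dist_mul_one_sub_cos_angle_le (x y z : P) :
    2 * dist x y * dist x z * (1 - cos (∠ y x z)) ≤ dist y z ^ 2 := by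
  have h := law_cos y x z
  rw [dist_comm y x, dist_comm z x] at h
  nlinarith [sq_nonneg (dist x y - dist x z)]

theorem dist_sq_eq_two_mul_dist_sq_mul_one_sub_cos_angle {x y z : P}
    (h : dist x y = dist x z) :
    dist y z ^ 2 = 2 * dist x y ^ 2 * (1 - cos (∠ y x z)) := by
  have h' := law_cos y x z
  rw [dist_comm y x, dist_comm z x, ← h] at h'
  linear_combination h'

theorem one_sub_cos_angle_le_of_dist_le {m M : ℝ} (hm : 0 < m) {x y z x' y' z' : P}
    (hxy' : x' ≠ y') (hxz' : x' ≠ z') (hiso : dist x y = dist x z)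
    (hy : dist x y ≤ M * dist x' y') (hz : dist x z ≤ M * dist x' z')
    (hyz : m * dist y' z' ≤ dist y z) :
    1 - cos (∠ y' x' z') ≤ (M / m) ^ 2 * (1 - cos (∠ y x z)) := by
  have hpq : 0 < 2 * dist x' y' * dist x' z' := by
    have := dist_pos.2 hxy'; have := dist_pos.2 hxz'; positivity
  have hcos : 0 ≤ 1 - cos (∠ y x z) := sub_nonneg.2 (cos_le_one _)
  have hsq : dist x y ^ 2 ≤ M ^ 2 * (dist x' y' * dist x' z') := calc
    dist x y ^ 2 = dist x y * dist x z := by rw [sq, ← hiso]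
    _ ≤ (M * dist x' y') * (M * dist x' z') :=
      mul_le_mul hy hz dist_nonneg (dist_nonneg.trans hy)
    _ = M ^ 2 * (dist x' y' * dist x' z') := by ring
  rw [div_pow, div_mul_eq_mul_div, le_div_iff₀ (by positivity)]
  refine le_of_mul_le_mul_left ?_ hpq
  calc 2 * dist x' y' * dist x' z' * ((1 - cos (∠ y' x' z')) * m ^ 2)
      = 2 * dist x' y' * dist x' z' * (1 - cos (∠ y' x' z')) * m ^ 2 := by ring
    _ ≤ dist y' z' ^ 2 * m ^ 2 := by
      gcongr; exact two_mul_dist_mul_dist_mul_one_sub_cos_angle_le x' y' z'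
    _ = (m * dist y' z') ^ 2 := by ring
    _ ≤ dist y z ^ 2 := by gcongr
    _ = 2 * dist x y ^ 2 * (1 - cos (∠ y x z)) :=
      dist_sq_eq_two_mul_dist_sq_mul_one_sub_cos_angle hiso
    _ ≤ 2 * (M ^ 2 * (dist x' y' * dist x' z')) * (1 - cos (∠ y x z)) := by gcongr
    _ = 2 * dist x' y' * dist x' z' * (M ^ 2 * (1 - cos (∠ y x z))) := by ring

end LawOfCosines

theorem exists_angle_comparison_function (m M : ℝ) (hm : 0 < m) :
    ∃ σ : ℝ → ℝ, ContinuousOn σ (Set.Ico 0 π) ∧ σ 0 = 0 ∧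
      (∀ θ ∈ Set.Ico (0:ℝ) π, 0 ≤ σ θ) ∧
      ∀ x y z x' y' z' : EuclideanSpace ℝ (Fin 2),
        x ≠ y → x ≠ z → y ≠ z → x' ≠ y' → x' ≠ z' → y' ≠ z' →
        dist x y = dist x z →
        EuclideanGeometry.angle y x z < π →
        m ≤ dist x y / dist x' y' → dist x y / dist x' y' ≤ M →
        m ≤ dist x z / dist x' z' → dist x z / dist x' z' ≤ M →
        m ≤ dist y z / dist y' z' → dist y z / dist y' z' ≤ M →
        EuclideanGeometry.angle y' x' z' ≤ σ (EuclideanGeometry.angle y x z) := by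
  refine ⟨fun θ => arccos (1 - (M / m) ^ 2 * (1 - cos θ)), by fun_prop, by simp,
    fun θ _ => arccos_nonneg _, ?_⟩
  intro x y z x' y' z' _ _ _ hxy' hxz' hyz' hiso _ _ hy _ hz hyz _
  have hcos := one_sub_cos_angle_le_of_dist_le hm hxy' hxz' hiso
    ((div_le_iff₀ (dist_pos.2 hxy')).1 hy) ((div_le_iff₀ (dist_pos.2 hxz')).1 hz)
    ((le_div_iff₀ (dist_pos.2 hyz')).1 hyz)
  calc ∠ y' x' z' = arccos (cos (∠ y' x' z')) :=
        (arccos_cos (angle_nonneg _ _ _) (angle_le_pi _ _ _)).symm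
    _ ≤ arccos (1 - (M / m) ^ 2 * (1 - cos (∠ y x z))) := arccos_le_arccos (by linarith)
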